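/- Let R be a prime ring which is a maximal subring of a ring S. Then exactly one of the following holds. (P) S is prime and every nonzero two-sided ideal of S intersects R nontrivially. Otherwise, there exists a nonzero two-sided ideal I of S with R ∩ I = {0} (and hence R + I = S), and for any such ideal I exactly one of the following holds, independently of the choice of I: (PI) I·I ≠ 0, ann_R(I) = {0}, and the only R-homomorphism I → R is zero — in this case S is prime; (SR) I·I ≠ 0, ann_R(I) ≠ {0}, and the only R-homomorphism I → R/ann_R(I) is zero — in this case S is semiprime but not prime; (SI) there is a nonzero R-homomorphism I → R/ann_R(I) — in this case S is semiprime but not prime; (N) I·I = 0 — in this case S is not semiprime. -/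

import Mathlib

section

variable {S : Type*} [Ring S]

/-- `R` is a maximal subring of `S`. -/
def IsMaximalSubring (R : Subring S) : Prop :=
  R ≠ ⊤ ∧ ∀ T : Subring S, R ≤ T → T = R ∨ T = ⊤

/-- A ring `A` is prime if `aAb = 0` implies `a = 0` or `b = 0`. -/
def IsPrimeRing (A : Type*) [Ring A] : Prop :=
  ∀ a b : A, (∀ x : A, a * x * b = 0) → a = 0 ∨ b = 0

/-- A ring `A` is semiprime if `aAa = 0` implies `a = 0`. -/
def IsSemiprimeRing (A : Type*) [Ring A] : Prop :=
  ∀ a : A, (∀ x : A, a * x * a = 0) → a = 0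

/-- `I` is a nonzero two-sided ideal of `S` intersecting `R` trivially. -/
def TrivInt (R : Subring S) (I : TwoSidedIdeal S) : Prop :=
  I ≠ ⊥ ∧ ∀ x : S, x ∈ R → x ∈ I → x = 0

/-- An `R`-homomorphism `φ : I → R`, encoded by a function `f : S → S` whose values on
`I` lie in `R` and which is additive, `R`-bilinear and multiplicative on `I`. -/
def IsRHomToR (R : Subring S) (I : TwoSidedIdeal S) (f : S → S) : Prop :=
  (∀ i ∈ I, f i ∈ R) ∧
  (∀ i ∈ I, ∀ j ∈ I, f (i + j) = f i + f j) ∧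
  (∀ r ∈ R, ∀ i ∈ I, f (r * i) = r * f i) ∧
  (∀ r ∈ R, ∀ i ∈ I, f (i * r) = f i * r) ∧
  (∀ i ∈ I, ∀ j ∈ I, f (i * j) = f i * f j)

/-- There is a nonzero `R`-homomorphism `I → R/Z` (for a two-sided ideal `Z` of `R`,
intended to be `ann_R(I)`), where `R/Z` carries the `R`-actions through the quotient
map. -/
def HasNonzeroRHomToQuot (R : Subring S) (I : TwoSidedIdeal S)
    (Z : TwoSidedIdeal R) : Prop :=
  ∃ f : S → Z.ringCon.Quotient,
    (∀ i ∈ I, ∀ j ∈ I, f (i + j) = f i + f j) ∧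
    (∀ r : R, ∀ i ∈ I, f ((r : S) * i) = (r : Z.ringCon.Quotient) * f i) ∧
    (∀ r : R, ∀ i ∈ I, f (i * (r : S)) = f i * (r : Z.ringCon.Quotient)) ∧
    (∀ i ∈ I, ∀ j ∈ I, f (i * j) = f i * f j) ∧
    (∃ i ∈ I, f i ≠ 0)

/-- Case (P): `S` is prime and every nonzero two-sided ideal of `S` meets `R`
nontrivially. -/
def CaseP (R : Subring S) : Prop :=
  IsPrimeRing S ∧ ∀ J : TwoSidedIdeal S, J ≠ ⊥ → ∃ x ∈ J, x ∈ R ∧ x ≠ 0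

/-- Case (PI): `I·I ≠ 0`, `ann_R(I) = 0`, and the only `R`-homomorphism `I → R` is
zero. -/
def CasePI (R : Subring S) (I : TwoSidedIdeal S) : Prop :=
  (∃ x ∈ I, ∃ y ∈ I, x * y ≠ 0) ∧
  (∀ x ∈ R, (∀ i ∈ I, x * i = 0 ∧ i * x = 0) → x = 0) ∧
  (∀ f : S → S, IsRHomToR R I f → ∀ i ∈ I, f i = 0)

/-- Case (SR): `I·I ≠ 0`, `ann_R(I) ≠ 0`, and the only `R`-homomorphism
`I → R/ann_R(I)` is zero. -/
def CaseSR (R : Subring S) (I : TwoSidedIdeal S) (Z : TwoSidedIdeal R) : Prop :=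
  (∃ x ∈ I, ∃ y ∈ I, x * y ≠ 0) ∧
  (∃ x ∈ R, x ≠ 0 ∧ ∀ i ∈ I, x * i = 0 ∧ i * x = 0) ∧
  ¬ HasNonzeroRHomToQuot R I Z

/-- Case (SI): there is a nonzero `R`-homomorphism `I → R/ann_R(I)`. -/
def CaseSI (R : Subring S) (I : TwoSidedIdeal S) (Z : TwoSidedIdeal R) : Prop :=
  HasNonzeroRHomToQuot R I Z

/-- Case (N): `I·I = 0`. -/
def CaseN (I : TwoSidedIdeal S) : Prop :=
  ∀ x ∈ I, ∀ y ∈ I, x * y = 0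


/-!
If `I` is a nonzero ideal of `S` with `R ∩ I = 0`, then `R + I` is a subring strictly larger than
`R`, so `S = R ⊕ I` and the projection `ρ : S → R` along `I` is a ring homomorphism. Applied to a
nonzero subideal of `I`, the same argument shows that `I` is a minimal ideal: every ideal of `S`
either meets `I` trivially or contains it.

An `R`-homomorphism `f : I → R/ann_R(I)` extends to the ring homomorphism
`s ↦ ρ s + f (s - ρ s)` on `S`; if `f ≠ 0` its kernel is a nonzero ideal meeting `I` trivially,
hence annihilating `I`, so `S` is not prime and `I² ≠ 0`. Conversely a second such ideal `I'`
yields `f = ρ_{I'}|_I`, which is nonzero as soon as `I² ≠ 0`. Primeness of `R` makes `S` prime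
when every nonzero ideal meets `R`, and semiprime when `I² ≠ 0`: a square-zero ideal meeting `I`
trivially is killed by `ρ`. Altogether (PI) holds iff `S` is prime and (N) iff `S` is not
semiprime, for every choice of `I`, while (SR) is impossible as soon as there are two choices.
-/

namespace TwoSidedIdeal

variable {A : Type*} [Ring A]

lemma exists_mem_ne_zero_of_ne_bot {J : TwoSidedIdeal A} (hJ : J ≠ ⊥) : ∃ x ∈ J, x ≠ 0 := by
  by_contra! h
  exact hJ (eq_bot_iff.2 fun x hx => (mem_bot A).2 (h x hx))

lemma span_singleton_ne_bot {a : A} (ha : a ≠ 0) : span {a} ≠ ⊥ := fun h =>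
  ha ((mem_bot A).1 (h ▸ subset_span rfl))

lemma eq_zero_of_disjoint {J K : TwoSidedIdeal A} (h : Disjoint J K) {x : A} (hJ : x ∈ J)
    (hK : x ∈ K) : x = 0 :=
  (mem_bot A).1 (disjoint_iff.1 h ▸ (mem_inf A).2 ⟨hJ, hK⟩)

lemma mul_eq_zero_of_disjoint {J K : TwoSidedIdeal A} (h : Disjoint J K) {x y : A} (hx : x ∈ J)
    (hy : y ∈ K) : x * y = 0 :=
  eq_zero_of_disjoint h (J.mul_mem_right _ _ hx) (K.mul_mem_left _ _ hy)

lemma mul_eq_zero_of_mem_span_singleton {a b : A} (h : ∀ x, a * x * b = 0) {u v : A}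
    (hu : u ∈ span {a}) (hv : v ∈ span {b}) : u * v = 0 := by
  have hleft : ∀ z, u * z * b = 0 := by
    induction hu using span_induction with
    | mem x hx => rw [Set.mem_singleton_iff.1 hx]; exact h
    | zero => simp
    | add x y _ _ hx hy => intro z; rw [add_mul, add_mul, hx, hy, add_zero]
    | neg x _ hx => intro z; rw [neg_mul, neg_mul, hx, neg_zero]
    | left_absorb c x _ hx => intro z; rw [mul_assoc c, mul_assoc c, hx, mul_zero]
    | right_absorb c x _ hx => intro z; rw [mul_assoc x c, hx]
  have hboth : ∀ z, u * z * v = 0 := by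
    induction hv using span_induction with
    | mem x hx => rw [Set.mem_singleton_iff.1 hx]; exact hleft
    | zero => simp
    | add x y _ _ hx hy => intro z; rw [mul_add, hx, hy, add_zero]
    | neg x _ hx => intro z; rw [mul_neg, hx, neg_zero]
    | left_absorb c x _ hx => intro z; rw [← mul_assoc, mul_assoc u z c, hx]
    | right_absorb c x _ hx => intro z; rw [← mul_assoc, hx, zero_mul]
  simpa using hboth 1

lemma coe_quotient_eq_zero_iff (J : TwoSidedIdeal A) (x : A) :
    (x : J.ringCon.Quotient) = 0 ↔ x ∈ J := by
  rw [← RingCon.coe_zero, RingCon.eq, J.rel_iff, sub_zero]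

end TwoSidedIdeal

section PrimeRing

variable {A : Type*} [Ring A]

lemma IsPrimeRing.isSemiprimeRing (h : IsPrimeRing A) : IsSemiprimeRing A :=
  fun a ha => (h a a ha).elim id id

lemma isPrimeRing_of_forall_ne_bot
    (h : ∀ J K : TwoSidedIdeal A, J ≠ ⊥ → K ≠ ⊥ → ∃ u ∈ J, ∃ v ∈ K, u * v ≠ 0) :
    IsPrimeRing A := by
  intro a b hab
  by_contra! hne
  obtain ⟨u, hu, v, hv, huv⟩ := h _ _ (TwoSidedIdeal.span_singleton_ne_bot hne.1)
    (TwoSidedIdeal.span_singleton_ne_bot hne.2)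
  exact huv (TwoSidedIdeal.mul_eq_zero_of_mem_span_singleton hab hu hv)

lemma not_isPrimeRing_of_disjoint {J K : TwoSidedIdeal A} (hJ : J ≠ ⊥) (hK : K ≠ ⊥)
    (hJK : Disjoint J K) : ¬ IsPrimeRing A := by
  intro hA
  obtain ⟨u, hu, hu0⟩ := TwoSidedIdeal.exists_mem_ne_zero_of_ne_bot hJ
  obtain ⟨v, hv, hv0⟩ := TwoSidedIdeal.exists_mem_ne_zero_of_ne_bot hK
  refine (hA u v fun x => ?_).elim hu0 hv0
  exact TwoSidedIdeal.mul_eq_zero_of_disjoint hJK (J.mul_mem_right _ _ hu) hv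

lemma not_isSemiprimeRing_of_caseN {J : TwoSidedIdeal A} (hJ : J ≠ ⊥) (hN : CaseN J) :
    ¬ IsSemiprimeRing A := by
  intro hA
  obtain ⟨u, hu, hu0⟩ := TwoSidedIdeal.exists_mem_ne_zero_of_ne_bot hJ
  exact hu0 (hA u fun x => by rw [mul_assoc]; exact hN u hu _ (J.mul_mem_left _ _ hu))

end PrimeRing

lemma isPrimeRing_of_forall_exists_mem_subring {R : Subring S}
    (hRprime : ∀ a ∈ R, ∀ b ∈ R, (∀ x ∈ R, a * x * b = 0) → a = 0 ∨ b = 0)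
    (hmeets : ∀ J : TwoSidedIdeal S, J ≠ ⊥ → ∃ x ∈ J, x ∈ R ∧ x ≠ 0) : IsPrimeRing S := by
  refine isPrimeRing_of_forall_ne_bot fun J K hJ hK => ?_
  obtain ⟨x, hxJ, hxR, hx0⟩ := hmeets J hJ
  obtain ⟨y, hyK, hyR, hy0⟩ := hmeets K hK
  by_contra! h
  obtain hx | hy := hRprime x hxR y hyR fun w _ => h _ (J.mul_mem_right _ w hxJ) y hyK
  exacts [hx0 hx, hy0 hy]

lemma caseP_or_exists_trivInt {R : Subring S}
    (hRprime : ∀ a ∈ R, ∀ b ∈ R, (∀ x ∈ R, a * x * b = 0) → a = 0 ∨ b = 0) :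
    CaseP R ∨ ∃ I : TwoSidedIdeal S, TrivInt R I := by
  by_cases hex : ∃ I : TwoSidedIdeal S, TrivInt R I
  · exact Or.inr hex
  have hmeets : ∀ J : TwoSidedIdeal S, J ≠ ⊥ → ∃ x ∈ J, x ∈ R ∧ x ≠ 0 := fun J hJ => by
    by_contra! h
    exact hex ⟨J, hJ, fun x hxR hxJ => h x hxJ hxR⟩
  exact Or.inl ⟨isPrimeRing_of_forall_exists_mem_subring hRprime hmeets, hmeets⟩

lemma isRHomToR_of_ringHom {R : Subring S} {I : TwoSidedIdeal S} (Φ : S →+* R)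
    (hΦ : ∀ r : R, Φ r = r) : IsRHomToR R I (fun s => Φ s) := by
  refine ⟨fun i _ => (Φ i).2, fun i _ j _ => by simp, fun r hr i _ => ?_, fun r hr i _ => ?_,
    fun i _ j _ => by simp⟩
  · simpa using congrArg Subtype.val (congrArg (· * Φ i) (hΦ ⟨r, hr⟩))
  · simpa using congrArg Subtype.val (congrArg (Φ i * ·) (hΦ ⟨r, hr⟩))

lemma hasNonzeroRHomToQuot_of_isRHomToR {R : Subring S} {I : TwoSidedIdeal S}
    {Z : TwoSidedIdeal R} (hZ : ∀ x ∈ Z, x = 0) {f : S → S} (hf : IsRHomToR R I f) {i : S}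
    (hi : i ∈ I) (hfi : f i ≠ 0) : HasNonzeroRHomToQuot R I Z := by
  classical
  obtain ⟨hmem, hadd, hleft, hright, hmul⟩ := hf
  let g : S → R := fun s => if h : s ∈ I then ⟨f s, hmem s h⟩ else 0
  have hg : ∀ s ∈ I, (g s : S) = f s := fun s hs => by simp [g, hs]
  refine ⟨fun s => (g s : Z.ringCon.Quotient), fun i hi j hj => ?_, fun r i hi => ?_,
    fun r i hi => ?_, fun i hi j hj => ?_, i, hi, fun h => hfi ?_⟩
  · rw [← RingCon.coe_add]
    refine congrArg _ (Subtype.ext ?_)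
    push_cast
    rw [hg _ (I.add_mem hi hj), hg _ hi, hg _ hj, hadd i hi j hj]
  · rw [← RingCon.coe_mul]
    refine congrArg _ (Subtype.ext ?_)
    push_cast
    rw [hg _ (I.mul_mem_left _ _ hi), hg _ hi, hleft _ r.2 i hi]
  · rw [← RingCon.coe_mul]
    refine congrArg _ (Subtype.ext ?_)
    push_cast
    rw [hg _ (I.mul_mem_right _ _ hi), hg _ hi, hright _ r.2 i hi]
  · rw [← RingCon.coe_mul]
    refine congrArg _ (Subtype.ext ?_)
    push_cast
    rw [hg _ (I.mul_mem_left _ _ hj), hg _ hi, hg _ hj, hmul i hi j hj]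
  · rw [← hg i hi, hZ _ ((Z.coe_quotient_eq_zero_iff _).1 h), ZeroMemClass.coe_zero]

lemma casePI_or_caseSR_or_caseSI_or_caseN {R : Subring S} {I : TwoSidedIdeal S}
    {Z : TwoSidedIdeal R}
    (hZ : ∀ x : R, x ∈ Z ↔ ∀ i ∈ I, (x : S) * i = 0 ∧ i * (x : S) = 0) :
    CasePI R I ∨ CaseSR R I Z ∨ CaseSI R I Z ∨ CaseN I := by
  by_cases hN : CaseN I
  · exact Or.inr (Or.inr (Or.inr hN))
  by_cases hSI : CaseSI R I Z
  · exact Or.inr (Or.inr (Or.inl hSI))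
  have hsq : ∃ x ∈ I, ∃ y ∈ I, x * y ≠ 0 := by simpa [CaseN] using hN
  by_cases hann : ∃ x ∈ R, x ≠ 0 ∧ ∀ i ∈ I, x * i = 0 ∧ i * x = 0
  · exact Or.inr (Or.inl ⟨hsq, hann, hSI⟩)
  have hZ0 : ∀ z ∈ Z, z = 0 := fun z hz => by
    by_contra hz0
    exact hann ⟨z, z.2, by simpa using hz0, (hZ z).1 hz⟩
  refine Or.inl ⟨hsq, fun x hx hxI => ?_, fun f hf i hi => ?_⟩
  · by_contra hx0
    exact hann ⟨x, hx, hx0, hxI⟩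
  · by_contra hfi
    exact hSI (hasNonzeroRHomToQuot_of_isRHomToR hZ0 hf hi hfi)

namespace TrivInt

variable {R : Subring S} {I : TwoSidedIdeal S} {Z : TwoSidedIdeal R}

lemma injective_mk'_comp_subtype (hI : TrivInt R I) :
    Function.Injective (I.ringCon.mk'.comp R.subtype) := by
  intro r r' h
  have hmem : (r : S) - r' ∈ I := (I.rel_iff _ _).1 (RingCon.eq _ |>.1 h)
  exact Subtype.ext (sub_eq_zero.1 (hI.2 _ (R.sub_mem r.2 r'.2) hmem))

lemma surjective_mk'_comp_subtype (hmax : IsMaximalSubring R) (hI : TrivInt R I) :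
    Function.Surjective (I.ringCon.mk'.comp R.subtype) := by
  -- `T = R + I`, as the preimage of the image of `R` in `S ⧸ I`
  set T := (R.map I.ringCon.mk').comap I.ringCon.mk'
  have hRT : R ≤ T := fun r hr => ⟨r, hr, rfl⟩
  obtain ⟨i, hi, hi0⟩ := TwoSidedIdeal.exists_mem_ne_zero_of_ne_bot hI.1
  have hiT : i ∈ T := ⟨0, R.zero_mem, (RingCon.eq _).2 ((I.rel_iff _ _).2 (by simpa using hi))⟩
  have hT : T = ⊤ := (hmax.2 T hRT).resolve_left fun h => hi0 (hI.2 i (h ▸ hiT) hi)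
  intro q
  obtain ⟨s, rfl⟩ := I.ringCon.mk'_surjective q
  obtain ⟨r, hr, hrs⟩ := (hT ▸ Subring.mem_top s : s ∈ T)
  exact ⟨⟨r, hr⟩, hrs⟩

noncomputable def equivQuotient (hmax : IsMaximalSubring R) (hI : TrivInt R I) :
    R ≃+* I.ringCon.Quotient :=
  RingEquiv.ofBijective _ ⟨hI.injective_mk'_comp_subtype, hI.surjective_mk'_comp_subtype hmax⟩

noncomputable def retraction (hmax : IsMaximalSubring R) (hI : TrivInt R I) : S →+* R :=
  (hI.equivQuotient hmax).symm.toRingHom.comp I.ringCon.mk'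

section Retraction

variable (hmax : IsMaximalSubring R) (hI : TrivInt R I)

@[simp]
lemma retraction_coe (r : R) : hI.retraction hmax r = r :=
  (hI.equivQuotient hmax).symm_apply_apply r

lemma coe_retraction_of_mem {x : S} (hx : x ∈ R) : (hI.retraction hmax x : S) = x :=
  congrArg Subtype.val (hI.retraction_coe hmax ⟨x, hx⟩)

lemma sub_retraction_mem (s : S) : s - hI.retraction hmax s ∈ I := by
  have := (hI.equivQuotient hmax).apply_symm_apply (I.ringCon.mk' s)
  exact (I.rel_iff _ _).1 (I.ringCon.symm ((RingCon.eq _).1 this))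

lemma retraction_eq_zero_of_mem {i : S} (hi : i ∈ I) : hI.retraction hmax i = 0 := by
  have hmem : (hI.retraction hmax i : S) ∈ I := by
    simpa using I.sub_mem hi (hI.sub_retraction_mem hmax i)
  exact Subtype.ext (hI.2 _ (hI.retraction hmax i).2 hmem)

end Retraction

lemma exists_add_eq (hmax : IsMaximalSubring R) (hI : TrivInt R I) (s : S) :
    ∃ r ∈ R, ∃ i ∈ I, s = r + i :=
  ⟨_, (hI.retraction hmax s).2, _, hI.sub_retraction_mem hmax s, by abel⟩

lemma le_of_not_disjoint (hmax : IsMaximalSubring R) (hI : TrivInt R I) {J : TwoSidedIdeal S}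
    (hJ : ¬ Disjoint J I) : I ≤ J := by
  have hK : TrivInt R (J ⊓ I) := ⟨fun h => hJ (disjoint_iff.2 h),
    fun x hxR hxK => hI.2 x hxR ((TwoSidedIdeal.mem_inf S).1 hxK).2⟩
  intro i hi
  have hiK := (TwoSidedIdeal.mem_inf S).1 (hK.sub_retraction_mem hmax i)
  have hρ : (hK.retraction hmax i : S) = 0 :=
    hI.2 _ (hK.retraction hmax i).2 (by simpa using I.sub_mem hi hiK.2)
  simpa [hρ] using hiK.1

lemma disjoint_of_ne (hmax : IsMaximalSubring R) (hI : TrivInt R I) {I' : TwoSidedIdeal S}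
    (hI' : TrivInt R I') (hne : I ≠ I') : Disjoint I I' := by
  by_contra h
  exact hne (le_antisymm (hI.le_of_not_disjoint hmax fun h' => h h'.symm)
    (hI'.le_of_not_disjoint hmax h))

lemma isSemiprimeRing (hmax : IsMaximalSubring R)
    (hRprime : ∀ a ∈ R, ∀ b ∈ R, (∀ x ∈ R, a * x * b = 0) → a = 0 ∨ b = 0)
    (hI : TrivInt R I) (hN : ¬ CaseN I) : IsSemiprimeRing S := by
  intro a ha
  have hJ : CaseN (TwoSidedIdeal.span {a}) := fun u hu v hv =>
    TwoSidedIdeal.mul_eq_zero_of_mem_span_singleton ha hu hv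
  by_cases hJI : Disjoint (TwoSidedIdeal.span {a}) I
  · set ρ := hI.retraction hmax
    have hρa : (ρ a : S) = 0 := by
      refine (hRprime _ (ρ a).2 _ (ρ a).2 fun x hx => ?_).elim id id
      simpa [ρ, hI.coe_retraction_of_mem hmax hx] using congrArg (fun s => (ρ s : S)) (ha x)
    refine TwoSidedIdeal.eq_zero_of_disjoint hJI (TwoSidedIdeal.subset_span rfl) ?_
    rw [← sub_zero a, ← hρa]
    exact hI.sub_retraction_mem hmax a
  · have hIJ := hI.le_of_not_disjoint hmax hJI
    exact absurd (fun x hx y hy => hJ x (hIJ hx) y (hIJ hy)) hN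

lemma exists_ringHom_extension (hmax : IsMaximalSubring R) (hI : TrivInt R I) {T : Type*}
    [Ring T] (ι : R →+* T) (f : S → T)
    (hadd : ∀ i ∈ I, ∀ j ∈ I, f (i + j) = f i + f j)
    (hleft : ∀ r : R, ∀ i ∈ I, f (r * i) = ι r * f i)
    (hright : ∀ r : R, ∀ i ∈ I, f (i * r) = f i * ι r)
    (hmul : ∀ i ∈ I, ∀ j ∈ I, f (i * j) = f i * f j) :
    ∃ Φ : S →+* T, (∀ r : R, Φ r = ι r) ∧ ∀ i ∈ I, Φ i = f i := by
  set ρ := hI.retraction hmax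
  have hρ : ∀ s, s - ρ s ∈ I := hI.sub_retraction_mem hmax
  have hf0 : f 0 = 0 := by simpa using hadd 0 I.zero_mem 0 I.zero_mem
  let Φ : S →+* T :=
    { toFun := fun s => ι (ρ s) + f (s - ρ s)
      map_one' := by simp [hf0]
      map_zero' := by simp [hf0]
      map_add' := fun s t => by
        have h : s + t - ρ (s + t) = (s - ρ s) + (t - ρ t) := by push_cast [map_add]; abel
        rw [h, hadd _ (hρ s) _ (hρ t), map_add, map_add]
        abel
      map_mul' := fun s t => by
        have h : s * t - ρ (s * t) =
            ρ s * (t - ρ t) + (s - ρ s) * ρ t + (s - ρ s) * (t - ρ t) := by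
          push_cast [map_mul]; noncomm_ring
        have hl := I.mul_mem_left (ρ s) _ (hρ t)
        have hr := I.mul_mem_right _ (ρ t) (hρ s)
        rw [h, hadd _ (I.add_mem hl hr) _ (I.mul_mem_left _ _ (hρ t)), hadd _ hl _ hr,
          hleft _ _ (hρ t), hright _ _ (hρ s), hmul _ (hρ s) _ (hρ t), map_mul, map_mul]
        noncomm_ring }
  exact ⟨Φ, fun r => by simp [Φ, ρ, hf0], fun i hi => by
    simp [Φ, ρ, hI.retraction_eq_zero_of_mem hmax hi]⟩

lemma hasNonzeroRHomToQuot_iff (hmax : IsMaximalSubring R) (hI : TrivInt R I) :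
    HasNonzeroRHomToQuot R I Z ↔
      ∃ Φ : S →+* Z.ringCon.Quotient, (∀ r : R, Φ r = r) ∧ ∃ i ∈ I, Φ i ≠ 0 := by
  constructor
  · rintro ⟨f, hadd, hleft, hright, hmul, i, hi, hfi⟩
    obtain ⟨Φ, hΦR, hΦI⟩ := hI.exists_ringHom_extension hmax Z.ringCon.mk' f hadd hleft hright hmul
    exact ⟨Φ, hΦR, i, hi, hΦI i hi ▸ hfi⟩
  · rintro ⟨Φ, hΦ, hnz⟩
    exact ⟨Φ, fun _ _ _ _ => map_add Φ _ _, fun r _ _ => by rw [map_mul, hΦ],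
      fun r _ _ => by rw [map_mul, hΦ], fun _ _ _ _ => map_mul Φ _ _, hnz⟩

lemma disjoint_ker (hmax : IsMaximalSubring R) (hI : TrivInt R I) {T : Type*} [Ring T]
    {Φ : S →+* T} {i : S} (hi : i ∈ I) (hΦi : Φ i ≠ 0) : Disjoint (TwoSidedIdeal.ker Φ) I := by
  by_contra h
  exact hΦi ((TwoSidedIdeal.mem_ker Φ).1 (hI.le_of_not_disjoint hmax h hi))

lemma exists_sub_mem_ker (hI : TrivInt R I) {Φ : S →+* Z.ringCon.Quotient}
    (hΦ : ∀ r : R, Φ r = r) {i : S} (hi : i ∈ I) (hΦi : Φ i ≠ 0) :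
    ∃ r : R, Φ i = r ∧ i - r ∈ TwoSidedIdeal.ker Φ ∧ i - r ≠ 0 := by
  obtain ⟨r, hr⟩ := Z.ringCon.mk'_surjective (Φ i)
  refine ⟨r, hr.symm, (TwoSidedIdeal.mem_ker Φ).2 ?_, fun h => hΦi ?_⟩
  · rw [map_sub, hΦ, ← hr, RingCon.coe_mk', sub_self]
  · rw [hI.2 i (sub_eq_zero.1 h ▸ r.2) hi, map_zero]

lemma not_isPrimeRing_of_ringHom (hmax : IsMaximalSubring R) (hI : TrivInt R I)
    {Φ : S →+* Z.ringCon.Quotient} (hΦ : ∀ r : R, Φ r = r) {i : S} (hi : i ∈ I)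
    (hΦi : Φ i ≠ 0) : ¬ IsPrimeRing S := by
  obtain ⟨r, -, hker, hne⟩ := hI.exists_sub_mem_ker hΦ hi hΦi
  refine not_isPrimeRing_of_disjoint (fun h => hne ?_) hI.1 (hI.disjoint_ker hmax hi hΦi)
  exact (TwoSidedIdeal.mem_bot S).1 (h ▸ hker)

lemma not_caseN_of_ringHom (hmax : IsMaximalSubring R) (hI : TrivInt R I)
    (hZ : ∀ x : R, x ∈ Z ↔ ∀ i ∈ I, (x : S) * i = 0 ∧ i * (x : S) = 0)
    {Φ : S →+* Z.ringCon.Quotient} (hΦ : ∀ r : R, Φ r = r) {i : S} (hi : i ∈ I)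
    (hΦi : Φ i ≠ 0) : ¬ CaseN I := by
  intro hN
  obtain ⟨r, hr, hker, -⟩ := hI.exists_sub_mem_ker hΦ hi hΦi
  have hdisj := hI.disjoint_ker hmax hi hΦi
  -- `r = i - (i - r)` annihilates `I`: `i` because `I² = 0`, `i - r` because `ker Φ ∩ I = 0`
  refine hΦi (hr.trans ((Z.coe_quotient_eq_zero_iff r).2 ((hZ r).2 fun k hk => ⟨?_, ?_⟩)))
  · rw [← sub_sub_cancel i r, sub_mul, hN i hi k hk,
      TwoSidedIdeal.mul_eq_zero_of_disjoint hdisj hker hk, sub_zero]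
  · rw [← sub_sub_cancel i r, mul_sub, hN k hk i hi,
      TwoSidedIdeal.mul_eq_zero_of_disjoint hdisj.symm hk hker, sub_zero]

lemma hasNonzeroRHomToQuot_of_disjoint (hmax : IsMaximalSubring R) (hI : TrivInt R I)
    {J : TwoSidedIdeal S} (hJ : TrivInt R J) (hIJ : Disjoint I J)
    (hZ : ∀ x : R, x ∈ Z ↔ ∀ i ∈ I, (x : S) * i = 0 ∧ i * (x : S) = 0) (hN : ¬ CaseN I) :
    HasNonzeroRHomToQuot R I Z := by
  refine (hI.hasNonzeroRHomToQuot_iff hmax).2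
    ⟨Z.ringCon.mk'.comp (hJ.retraction hmax), fun r => by simp, ?_⟩
  by_contra! h
  refine hN fun x hx y hy => ?_
  have hxZ := (hZ _).1 ((Z.coe_quotient_eq_zero_iff _).1 (h x hx))
  rw [← sub_add_cancel x (hJ.retraction hmax x), add_mul, (hxZ y hy).1, add_zero]
  exact TwoSidedIdeal.mul_eq_zero_of_disjoint hIJ.symm (hJ.sub_retraction_mem hmax x) hy

lemma le_of_casePI (hmax : IsMaximalSubring R) (hI : TrivInt R I) (hPI : CasePI R I)
    {J : TwoSidedIdeal S} (hJ : J ≠ ⊥) : I ≤ J := by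
  by_contra hIJ
  have hJI : Disjoint J I := by
    by_contra h
    exact hIJ (hI.le_of_not_disjoint hmax h)
  have hJR : TrivInt R J := ⟨hJ, fun x hxR hxJ => hPI.2.1 x hxR fun i hi =>
    ⟨TwoSidedIdeal.mul_eq_zero_of_disjoint hJI hxJ hi,
      TwoSidedIdeal.mul_eq_zero_of_disjoint hJI.symm hi hxJ⟩⟩
  obtain ⟨i, hi, hi0⟩ := TwoSidedIdeal.exists_mem_ne_zero_of_ne_bot hI.1
  have hρi := hPI.2.2 _ (isRHomToR_of_ringHom _ (hJR.retraction_coe hmax)) i hi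
  refine hi0 (TwoSidedIdeal.eq_zero_of_disjoint hJI ?_ hi)
  simpa [hρi] using hJR.sub_retraction_mem hmax i

lemma isPrimeRing_of_casePI (hmax : IsMaximalSubring R) (hI : TrivInt R I)
    (hPI : CasePI R I) : IsPrimeRing S :=
  isPrimeRing_of_forall_ne_bot fun _ _ hJ hK => by
    obtain ⟨x, hx, y, hy, hxy⟩ := hPI.1
    exact ⟨x, hI.le_of_casePI hmax hPI hJ hx, y, hI.le_of_casePI hmax hPI hK hy, hxy⟩

lemma isSemiprimeRing_and_not_isPrimeRing_of_caseSR (hmax : IsMaximalSubring R)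
    (hRprime : ∀ a ∈ R, ∀ b ∈ R, (∀ x ∈ R, a * x * b = 0) → a = 0 ∨ b = 0)
    (hI : TrivInt R I) (hSR : CaseSR R I Z) : IsSemiprimeRing S ∧ ¬ IsPrimeRing S := by
  obtain ⟨⟨x, hx, y, hy, hxy⟩, ⟨a, -, ha0, ha⟩, -⟩ := hSR
  refine ⟨hI.isSemiprimeRing hmax hRprime fun hN => hxy (hN x hx y hy), fun hP => ?_⟩
  obtain ⟨i, hi, hi0⟩ := TwoSidedIdeal.exists_mem_ne_zero_of_ne_bot hI.1
  refine (hP a i fun s => ?_).elim ha0 hi0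
  rw [mul_assoc]
  exact (ha _ (I.mul_mem_left s i hi)).1

lemma isSemiprimeRing_and_not_isPrimeRing_of_caseSI (hmax : IsMaximalSubring R)
    (hRprime : ∀ a ∈ R, ∀ b ∈ R, (∀ x ∈ R, a * x * b = 0) → a = 0 ∨ b = 0)
    (hI : TrivInt R I) (hZ : ∀ x : R, x ∈ Z ↔ ∀ i ∈ I, (x : S) * i = 0 ∧ i * (x : S) = 0)
    (hSI : CaseSI R I Z) : IsSemiprimeRing S ∧ ¬ IsPrimeRing S := by
  obtain ⟨Φ, hΦ, i, hi, hΦi⟩ := (hI.hasNonzeroRHomToQuot_iff hmax).1 hSI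
  exact ⟨hI.isSemiprimeRing hmax hRprime (hI.not_caseN_of_ringHom hmax hZ hΦ hi hΦi),
    hI.not_isPrimeRing_of_ringHom hmax hΦ hi hΦi⟩

lemma caseN_iff_not_isSemiprimeRing (hmax : IsMaximalSubring R)
    (hRprime : ∀ a ∈ R, ∀ b ∈ R, (∀ x ∈ R, a * x * b = 0) → a = 0 ∨ b = 0)
    (hI : TrivInt R I) : CaseN I ↔ ¬ IsSemiprimeRing S :=
  ⟨not_isSemiprimeRing_of_caseN hI.1, not_imp_comm.1 (hI.isSemiprimeRing hmax hRprime)⟩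

lemma casePI_iff_isPrimeRing (hmax : IsMaximalSubring R)
    (hRprime : ∀ a ∈ R, ∀ b ∈ R, (∀ x ∈ R, a * x * b = 0) → a = 0 ∨ b = 0)
    (hI : TrivInt R I) (hZ : ∀ x : R, x ∈ Z ↔ ∀ i ∈ I, (x : S) * i = 0 ∧ i * (x : S) = 0) :
    CasePI R I ↔ IsPrimeRing S := by
  refine ⟨hI.isPrimeRing_of_casePI hmax, fun hP => ?_⟩
  rcases casePI_or_caseSR_or_caseSI_or_caseN hZ with hPI | hSR | hSI | hN
  · exact hPI
  · exact absurd hP (hI.isSemiprimeRing_and_not_isPrimeRing_of_caseSR hmax hRprime hSR).2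
  · exact absurd hP (hI.isSemiprimeRing_and_not_isPrimeRing_of_caseSI hmax hRprime hZ hSI).2
  · exact absurd hP.isSemiprimeRing (not_isSemiprimeRing_of_caseN hI.1 hN)

lemma caseSI_iff (hmax : IsMaximalSubring R)
    (hRprime : ∀ a ∈ R, ∀ b ∈ R, (∀ x ∈ R, a * x * b = 0) → a = 0 ∨ b = 0)
    (hI : TrivInt R I) (hZ : ∀ x : R, x ∈ Z ↔ ∀ i ∈ I, (x : S) * i = 0 ∧ i * (x : S) = 0) :
    CaseSI R I Z ↔ IsSemiprimeRing S ∧ ¬ IsPrimeRing S ∧ ¬ CaseSR R I Z := by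
  refine ⟨fun hSI => ?_, fun ⟨hSP, hP, hSR⟩ => ?_⟩
  · obtain ⟨hSP, hP⟩ := hI.isSemiprimeRing_and_not_isPrimeRing_of_caseSI hmax hRprime hZ hSI
    exact ⟨hSP, hP, fun hSR => hSR.2.2 hSI⟩
  rcases casePI_or_caseSR_or_caseSI_or_caseN hZ with hPI | hSR' | hSI | hN
  · exact absurd (hI.isPrimeRing_of_casePI hmax hPI) hP
  · exact absurd hSR' hSR
  · exact hSI
  · exact absurd hSP (not_isSemiprimeRing_of_caseN hI.1 hN)

lemma not_caseSR_of_disjoint (hmax : IsMaximalSubring R) (hI : TrivInt R I)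
    {J : TwoSidedIdeal S} (hJ : TrivInt R J) (hIJ : Disjoint I J)
    (hZ : ∀ x : R, x ∈ Z ↔ ∀ i ∈ I, (x : S) * i = 0 ∧ i * (x : S) = 0) : ¬ CaseSR R I Z :=
  fun ⟨⟨x, hx, y, hy, hxy⟩, _, hSI⟩ =>
    hSI (hI.hasNonzeroRHomToQuot_of_disjoint hmax hJ hIJ hZ fun hN => hxy (hN x hx y hy))

end TrivInt

/-- Classification of the minimal extensions of a prime ring `R`:
either case (P) holds, or some nonzero two-sided ideal `I` meets `R` trivially (and
then `R + I = S`); for any such `I`, with `Z = ann_R(I)`, exactly one of the cases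
(PI), (SR), (SI), (N) holds — independently of the choice of `I` — and accordingly `S`
is prime / semiprime not prime / semiprime not prime / not semiprime. -/
theorem stmt18 (R : Subring S) (hmax : IsMaximalSubring R)
    (hRprime : ∀ a ∈ R, ∀ b ∈ R, (∀ x ∈ R, a * x * b = 0) → a = 0 ∨ b = 0) :
    -- exactly one of: case (P), or some nonzero ideal meets `R` trivially
    ((CaseP R ∨ ∃ I : TwoSidedIdeal S, TrivInt R I) ∧
      ¬ (CaseP R ∧ ∃ I : TwoSidedIdeal S, TrivInt R I)) ∧
    -- for any such ideal, `R + I = S`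
    (∀ I : TwoSidedIdeal S, TrivInt R I → ∀ s : S, ∃ r ∈ R, ∃ i ∈ I, s = r + i) ∧
    -- for any such ideal, exactly one of (PI), (SR), (SI), (N), with consequences
    (∀ I : TwoSidedIdeal S, TrivInt R I →
      ∀ Z : TwoSidedIdeal R,
        (∀ x : R, x ∈ Z ↔ ∀ i ∈ I, (x : S) * i = 0 ∧ i * (x : S) = 0) →
        ((CasePI R I ∨ CaseSR R I Z ∨ CaseSI R I Z ∨ CaseN I) ∧
         (¬ (CasePI R I ∧ CaseSR R I Z)) ∧ (¬ (CasePI R I ∧ CaseSI R I Z)) ∧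
         (¬ (CasePI R I ∧ CaseN I)) ∧ (¬ (CaseSR R I Z ∧ CaseSI R I Z)) ∧
         (¬ (CaseSR R I Z ∧ CaseN I)) ∧ (¬ (CaseSI R I Z ∧ CaseN I)) ∧
         (CasePI R I → IsPrimeRing S) ∧
         (CaseSR R I Z → IsSemiprimeRing S ∧ ¬ IsPrimeRing S) ∧
         (CaseSI R I Z → IsSemiprimeRing S ∧ ¬ IsPrimeRing S) ∧
         (CaseN I → ¬ IsSemiprimeRing S))) ∧
    -- the case does not depend on the choice of `I`
    (∀ I I' : TwoSidedIdeal S, TrivInt R I → TrivInt R I' →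
      ∀ Z Z' : TwoSidedIdeal R,
        (∀ x : R, x ∈ Z ↔ ∀ i ∈ I, (x : S) * i = 0 ∧ i * (x : S) = 0) →
        (∀ x : R, x ∈ Z' ↔ ∀ i ∈ I', (x : S) * i = 0 ∧ i * (x : S) = 0) →
        ((CasePI R I ↔ CasePI R I') ∧ (CaseSR R I Z ↔ CaseSR R I' Z') ∧
         (CaseSI R I Z ↔ CaseSI R I' Z') ∧ (CaseN I ↔ CaseN I'))) := by
  refine ⟨⟨?_, ?_⟩, fun I hI => hI.exists_add_eq hmax, fun I hI Z hZ => ?_, ?_⟩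
  · exact caseP_or_exists_trivInt hRprime
  · rintro ⟨⟨-, hmeets⟩, I, hI0, hI⟩
    obtain ⟨x, hxI, hxR, hx0⟩ := hmeets I hI0
    exact hx0 (hI x hxR hxI)
  · have hPI := hI.isPrimeRing_of_casePI hmax
    have hSR := hI.isSemiprimeRing_and_not_isPrimeRing_of_caseSR (Z := Z) hmax hRprime
    have hSI := hI.isSemiprimeRing_and_not_isPrimeRing_of_caseSI hmax hRprime hZ
    have hN := not_isSemiprimeRing_of_caseN hI.1
    exact ⟨casePI_or_caseSR_or_caseSI_or_caseN hZ, fun h => (hSR h.2).2 (hPI h.1),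
      fun h => (hSI h.2).2 (hPI h.1), fun h => hN h.2 (hPI h.1).isSemiprimeRing,
      fun h => h.1.2.2 h.2, fun h => hN h.2 (hSR h.1).1, fun h => hN h.2 (hSI h.1).1,
      hPI, hSR, hSI, hN⟩
  · intro I I' hI hI' Z Z' hZ hZ'
    by_cases hII' : I = I'
    · subst hII'
      obtain rfl : Z = Z' := SetLike.ext fun x => (hZ x).trans (hZ' x).symm
      exact ⟨Iff.rfl, Iff.rfl, Iff.rfl, Iff.rfl⟩
    have hdisj := hI.disjoint_of_ne hmax hI' hII'
    have hSR := hI.not_caseSR_of_disjoint hmax hI' hdisj hZ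
    have hSR' := hI'.not_caseSR_of_disjoint hmax hI hdisj.symm hZ'
    rw [hI.casePI_iff_isPrimeRing hmax hRprime hZ, hI'.casePI_iff_isPrimeRing hmax hRprime hZ',
      hI.caseSI_iff hmax hRprime hZ, hI'.caseSI_iff hmax hRprime hZ',
      hI.caseN_iff_not_isSemiprimeRing hmax hRprime,
      hI'.caseN_iff_not_isSemiprimeRing hmax hRprime]
    simp [hSR, hSR']

end
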